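/- arXiv:1907.09216 — 9 statements merged into one kernel-verified Lean document; each statement's English description precedes it below -/
import Mathlib

section
/- Let q : (X, ∂, ξ) → (X', ∂', ξ') be a surjective morphism of precrossed B-modules of groups, and let M, N be precrossed submodules of X. Then the image of the Peiffer commutator is the Peiffer commutator of the images: Subgroup.map q ⟨M, N⟩ = ⟨Subgroup.map q M, Subgroup.map q N⟩ (note that the images of B-invariant subgroups under the equivariant map q are again B-invariant). -/
variable {B X Y Z : Type*} [Group B] [Group X] [Group Y] [Group Z]

/-- `(X, δ, ξ)` is a precrossed `B`-module of groups:
`δ : X →* B` satisfies `δ (ξ b x) = b * δ x * b⁻¹`. -/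
def IsPrecrossedMod (δ : X →* B) (ξ : B →* MulAut X) : Prop :=
  ∀ (b : B) (x : X), δ (ξ b x) = b * δ x * b⁻¹

/-- A subgroup invariant under the `B`-action, i.e. a precrossed submodule. -/
def IsBInvariant (ξ : B →* MulAut X) (M : Subgroup X) : Prop :=
  ∀ (b : B), ∀ m ∈ M, ξ b m ∈ M

/-- The Peiffer commutator `⟨M, N⟩` of two precrossed submodules: the subgroup
generated by the Peiffer elements `m * n * m⁻¹ * (ξ (δ m) n)⁻¹` and
`n * m * n⁻¹ * (ξ (δ n) m)⁻¹` for `m ∈ M`, `n ∈ N`. -/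
def peifferCommutator (δ : X →* B) (ξ : B →* MulAut X) (M N : Subgroup X) : Subgroup X :=
  Subgroup.closure
    ({y | ∃ m ∈ M, ∃ n ∈ N, y = m * n * m⁻¹ * (ξ (δ m) n)⁻¹} ∪
     {y | ∃ m ∈ M, ∃ n ∈ N, y = n * m * n⁻¹ * (ξ (δ n) m)⁻¹})

/-- `f` is a morphism of precrossed `B`-modules. -/
def IsPXModHom (δ : X →* B) (ξ : B →* MulAut X) (δ' : Y →* B) (ξ' : B →* MulAut Y)
    (f : X →* Y) : Prop :=
  (∀ x : X, δ' (f x) = δ x) ∧ ∀ (b : B) (x : X), f (ξ b x) = ξ' b (f x)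

/-- the Peiffer commutator is preserved by regular images. -/
theorem map_peifferCommutator
    (δ : X →* B) (ξ : B →* MulAut X) (hpre : IsPrecrossedMod δ ξ)
    (δ' : Y →* B) (ξ' : B →* MulAut Y) (hpre' : IsPrecrossedMod δ' ξ')
    (q : X →* Y) (hq : Function.Surjective q) (hqhom : IsPXModHom δ ξ δ' ξ' q)
    (M N : Subgroup X) (hM : IsBInvariant ξ M) (hN : IsBInvariant ξ N) :
    Subgroup.map q (peifferCommutator δ ξ M N)
      = peifferCommutator δ' ξ' (Subgroup.map q M) (Subgroup.map q N) := by
  obtain ⟨hδ, hξ⟩ := hqhom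
  unfold peifferCommutator
  rw [MonoidHom.map_closure]
  congr 1
  ext y
  simp only [Set.image_union, Set.mem_union, Set.mem_image, Set.mem_setOf_eq,
    Subgroup.mem_map]
  constructor
  · rintro (⟨x, ⟨m, hm, n, hn, rfl⟩, rfl⟩ | ⟨x, ⟨m, hm, n, hn, rfl⟩, rfl⟩)
    · exact Or.inl ⟨q m, ⟨m, hm, rfl⟩, q n, ⟨n, hn, rfl⟩, by
        simp [map_mul, hξ, hδ]⟩
    · exact Or.inr ⟨q m, ⟨m, hm, rfl⟩, q n, ⟨n, hn, rfl⟩, by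
        simp [map_mul, hξ, hδ]⟩
  · rintro (⟨_, ⟨m, hm, rfl⟩, _, ⟨n, hn, rfl⟩, rfl⟩ | ⟨_, ⟨m, hm, rfl⟩, _, ⟨n, hn, rfl⟩, rfl⟩)
    · exact Or.inl ⟨m * n * m⁻¹ * (ξ (δ m) n)⁻¹, ⟨m, hm, n, hn, rfl⟩, by
        simp [map_mul, hξ, hδ]⟩
    · exact Or.inr ⟨n * m * n⁻¹ * (ξ (δ n) m)⁻¹, ⟨m, hm, n, hn, rfl⟩, by
        simp [map_mul, hξ, hδ]⟩
end

section
/- Let f : (X, ∂, ξ) → (Y, ∂', ξ') and g : (Z, ∂'', ξ'') → (Y, ∂', ξ') be surjective morphisms of precrossed B-modules of groups. Form the pullback P = {(x, z) ∈ X × Z : f x = g z}, which is a precrossed B-module with componentwise B-action and structure map (x, z) ↦ ∂ x, and let f' : P → Z be the second projection (a surjective morphism of precrossed B-modules). Then the Peiffer commutator ⟨ker f', ⊤⟩ in P is trivial if and only if the Peiffer commutator ⟨ker f, ⊤⟩ in X is trivial. -/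
variable {B X Y Z : Type*} [Group B] [Group X] [Group Y] [Group Z]

/-- The componentwise `B`-action on `X × Z`. -/
def prodAction (ξ : B →* MulAut X) (ξ'' : B →* MulAut Z) : B →* MulAut (X × Z) where
  toFun b := MulEquiv.prodCongr (ξ b) (ξ'' b)
  map_one' := by
    ext p <;> simp [MulEquiv.prodCongr]
  map_mul' b b' := by
    ext p <;> simp [MulEquiv.prodCongr]

/-- The pullback `P = {(x, z) | f x = g z}` as a subgroup of `X × Z`. -/
def pullbackSubgroup (f : X →* Y) (g : Z →* Y) : Subgroup (X × Z) where
  carrier := {p | f p.1 = g p.2}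
  one_mem' := by simp
  mul_mem' := by
    intro a b ha hb
    simp only [Set.mem_setOf_eq, Prod.fst_mul, Prod.snd_mul, map_mul] at *
    rw [ha, hb]
  inv_mem' := by
    intro a ha
    simp only [Set.mem_setOf_eq, Prod.fst_inv, Prod.snd_inv, map_inv] at *
    rw [ha]

/-- for a pullback of a surjection `g` along a surjection `f` of
precrossed `B`-modules, letting `f' : P → Z` be the second projection, the Peiffer
commutator `⟨ker f', ⊤⟩` computed in the pullback `P` (here realized inside `X × Z`,
where `ker f'` corresponds to `ker f` embedded via `inl` and `⊤_P` corresponds to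
the subgroup `P` itself) is trivial iff `⟨ker f, ⊤⟩` is trivial in `X`. -/
theorem peiffer_pullback_trivial_iff
    (δ : X →* B) (ξ : B →* MulAut X) (hpre : IsPrecrossedMod δ ξ)
    (δ' : Y →* B) (ξ' : B →* MulAut Y) (hpre' : IsPrecrossedMod δ' ξ')
    (δ'' : Z →* B) (ξ'' : B →* MulAut Z) (hpre'' : IsPrecrossedMod δ'' ξ'')
    (f : X →* Y) (hf : Function.Surjective f) (hfhom : IsPXModHom δ ξ δ' ξ' f)
    (g : Z →* Y) (hg : Function.Surjective g) (hghom : IsPXModHom δ'' ξ'' δ' ξ' g) :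
    peifferCommutator (δ.comp (MonoidHom.fst X Z)) (prodAction ξ ξ'')
        (Subgroup.map (MonoidHom.inl X Z) f.ker) (pullbackSubgroup f g) = ⊥ ↔
      peifferCommutator δ ξ f.ker ⊤ = ⊥ := by
  have hδ : ∀ a ∈ f.ker, δ a = 1 := fun a ha => by
    rw [← hfhom.1 a, MonoidHom.mem_ker.mp ha, map_one]
  have hact : ∀ (b : B) (p : X × Z),
      (prodAction ξ ξ'') b p = (ξ b p.1, ξ'' b p.2) := by
    intro b p; rfl
  have key : peifferCommutator (δ.comp (MonoidHom.fst X Z)) (prodAction ξ ξ'')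
        (Subgroup.map (MonoidHom.inl X Z) f.ker) (pullbackSubgroup f g)
      = Subgroup.map (MonoidHom.inl X Z) (peifferCommutator δ ξ f.ker ⊤) := by
    rw [peifferCommutator, peifferCommutator, MonoidHom.map_closure]
    congr 1
    ext p
    constructor
    · rintro (⟨m, ⟨a, ha, rfl⟩, n, hn, rfl⟩ | ⟨m, ⟨a, ha, rfl⟩, n, hn, rfl⟩)
      · refine ⟨a * n.1 * a⁻¹ * (ξ (δ a) n.1)⁻¹,
          Or.inl ⟨a, ha, n.1, trivial, rfl⟩, ?_⟩
        have h1 : δ.comp (MonoidHom.fst X Z) (MonoidHom.inl X Z a) = δ a := rfl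
        ext <;>
          simp [h1, hδ a ha, hact, Prod.ext_iff, MonoidHom.inl]
      · refine ⟨n.1 * a * n.1⁻¹ * (ξ (δ n.1) a)⁻¹,
          Or.inr ⟨a, ha, n.1, trivial, rfl⟩, ?_⟩
        have h1 : δ.comp (MonoidHom.fst X Z) n = δ n.1 := rfl
        ext <;>
          simp [h1, hδ a ha, hact, Prod.ext_iff, MonoidHom.inl]
    · rintro ⟨q, (⟨a, ha, x, -, rfl⟩ | ⟨a, ha, x, -, rfl⟩), rfl⟩
      · obtain ⟨z, hz⟩ := hg (f x)
        refine Or.inl ⟨MonoidHom.inl X Z a, ⟨a, ha, rfl⟩, (x, z), hz.symm, ?_⟩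
        have h1 : δ.comp (MonoidHom.fst X Z) (MonoidHom.inl X Z a) = δ a := rfl
        ext <;>
          simp [h1, hδ a ha, hact, Prod.ext_iff, MonoidHom.inl]
      · obtain ⟨z, hz⟩ := hg (f x)
        refine Or.inr ⟨MonoidHom.inl X Z a, ⟨a, ha, rfl⟩, (x, z), hz.symm, ?_⟩
        have h1 : δ.comp (MonoidHom.fst X Z) ((x, z) : X × Z) = δ x := rfl
        ext <;>
          simp [h1, hδ a ha, hact, Prod.ext_iff, MonoidHom.inl]
  rw [key, Subgroup.map_eq_bot_iff_of_injective _ (fun a b h => congrArg Prod.fst h)]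
end

section
/- Let f : (X, ∂, ξ) → (Y, ∂', ξ') be a surjective morphism of precrossed B-modules of groups. In the semidirect product X ⋊[ξ] B, let d : X ⋊[ξ] B →* B be the canonical projection (x, b) ↦ b, let c : X ⋊[ξ] B →* B be the homomorphism (x, b) ↦ ∂ x * b, and let K₁ be the image of ker f under the canonical inclusion inl : X →* X ⋊[ξ] B. Then the Peiffer commutator ⟨ker f, ⊤⟩ in X is trivial if and only if both commutator subgroups ⁅K₁, ker d⁆ and ⁅K₁, ker c⁆ are trivial in X ⋊[ξ] B. -/
variable {B X Y Z : Type*} [Group B] [Group X] [Group Y] [Group Z]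

/-!
Since `δ' ∘ f = δ`, the map `δ` kills `ker f`, so the Peiffer elements generating `⟨ker f, ⊤⟩`
are the ordinary commutators `⁅m, n⁆` and the defects `n * m * n⁻¹ * (ξ (δ n) m)⁻¹`.
In `X ⋊[ξ] B` we have `ker d = inl X`, so `⁅K₁, ker d⁆ = inl ⁅ker f, ⊤⁆`, while `ker c` consists
of the pairs `(n⁻¹, δ n)`, whose commutator with `inl m` is `inl` of the conjugate by `n⁻¹`
of that defect.
-/

open scoped commutatorElement

namespace SemidirectProduct

variable {N G : Type*} [Group N] [Group G] {φ : G →* MulAut N}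

theorem commutatorElement_inl (m : N) (g : N ⋊[φ] G) :
    ⁅(inl m : N ⋊[φ] G), g⁆ = inl (m * g.left * (φ g.right m)⁻¹ * g.left⁻¹) := by
  ext <;> simp [commutatorElement_def, mul_assoc]

theorem commutator_map_inl_ker_rightHom_eq_bot_iff (M : Subgroup N) :
    ⁅M.map (inl : N →* N ⋊[φ] G), (rightHom : N ⋊[φ] G →* G).ker⁆ = ⊥ ↔
      M ≤ Subgroup.center N := by
  rw [← range_inl_eq_ker_rightHom, MonoidHom.range_eq_map, ← Subgroup.map_commutator,
    Subgroup.map_eq_bot_iff_of_injective _ inl_injective,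
    Subgroup.commutator_top_right_eq_bot_iff_le_center]

end SemidirectProduct

open SemidirectProduct

theorem commutator_map_inl_ker_eq_bot_iff {δ : X →* B} {ξ : B →* MulAut X}
    {c : X ⋊[ξ] B →* B} (hc : ∀ (x : X) (b : B), c ⟨x, b⟩ = δ x * b) (M : Subgroup X) :
    ⁅M.map (inl : X →* X ⋊[ξ] B), c.ker⁆ = ⊥ ↔
      ∀ m ∈ M, ∀ n : X, n * m * n⁻¹ = ξ (δ n) m := by
  have hker : ∀ g : X ⋊[ξ] B, g ∈ c.ker ↔ ∃ n : X, ⟨n⁻¹, δ n⟩ = g := by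
    rintro ⟨x, b⟩
    rw [MonoidHom.mem_ker, hc]
    constructor
    · intro h
      exact ⟨x⁻¹, by rw [inv_inv, map_inv, eq_inv_of_mul_eq_one_right h]⟩
    · rintro ⟨n, hn⟩
      cases hn
      simp
  rw [eq_bot_iff, Subgroup.commutator_le]
  simp only [Subgroup.mem_map, hker, forall_exists_index, and_imp, forall_apply_eq_imp_iff₂,
    forall_apply_eq_imp_iff, commutatorElement_inl, Subgroup.mem_bot]
  refine forall₂_congr fun m _ => forall_congr' fun n => ?_
  have hconj :
      n * (m * n⁻¹ * (ξ (δ n) m)⁻¹ * n⁻¹⁻¹) * n⁻¹ = n * m * n⁻¹ * (ξ (δ n) m)⁻¹ := by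
    group
  rw [map_eq_one_iff _ inl_injective, ← conj_eq_one_iff (a := n), hconj, mul_inv_eq_one]

theorem peifferCommutator_top_eq_bot_iff {δ : X →* B} {ξ : B →* MulAut X} {M : Subgroup X}
    (hM : ∀ m ∈ M, δ m = 1) :
    peifferCommutator δ ξ M ⊤ = ⊥ ↔
      M ≤ Subgroup.center X ∧ ∀ m ∈ M, ∀ n : X, n * m * n⁻¹ = ξ (δ n) m := by
  rw [peifferCommutator, Subgroup.closure_eq_bot_iff, Set.union_subset_iff]
  have hcomm : ∀ m ∈ M, ∀ n : X, m * n * m⁻¹ * (ξ (δ m) n)⁻¹ = ⁅m, n⁆ := fun m hm n => by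
    rw [hM m hm, map_one, MulAut.one_apply, commutatorElement_def]
  refine and_congr ⟨fun h m hm => Subgroup.mem_center_iff.mpr fun n => ?_, ?_⟩
    ⟨fun h m hm n => ?_, ?_⟩
  · have hmn : ⁅m, n⁆ = 1 := hcomm m hm n ▸ h ⟨m, hm, n, trivial, rfl⟩
    exact (commutatorElement_eq_one_iff_mul_comm.mp hmn).symm
  · rintro h _ ⟨m, hm, n, -, rfl⟩
    rw [Set.mem_singleton_iff, hcomm m hm n, commutatorElement_eq_one_iff_mul_comm,
      Subgroup.mem_center_iff.mp (h hm)]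
  · exact mul_inv_eq_one.mp (h ⟨m, hm, n, trivial, rfl⟩)
  · rintro h _ ⟨m, hm, n, -, rfl⟩
    exact mul_inv_eq_one.mpr (h m hm n)

theorem peiffer_trivial_iff_commutators_trivial_general
    (δ : X →* B) (ξ : B →* MulAut X)
    (δ' : Y →* B) (ξ' : B →* MulAut Y)
    (f : X →* Y) (hfhom : IsPXModHom δ ξ δ' ξ' f)
    (c : X ⋊[ξ] B →* B) (hc : ∀ (x : X) (b : B), c ⟨x, b⟩ = δ x * b) :
    peifferCommutator δ ξ f.ker ⊤ = ⊥ ↔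
      (⁅Subgroup.map (SemidirectProduct.inl : X →* X ⋊[ξ] B) f.ker,
          (SemidirectProduct.rightHom : X ⋊[ξ] B →* B).ker⁆ = ⊥ ∧
       ⁅Subgroup.map (SemidirectProduct.inl : X →* X ⋊[ξ] B) f.ker, c.ker⁆ = ⊥) := by
  have hker : ∀ m ∈ f.ker, δ m = 1 := fun m hm => by
    rw [← hfhom.1 m, MonoidHom.mem_ker.mp hm, map_one]
  rw [peifferCommutator_top_eq_bot_iff hker, commutator_map_inl_ker_rightHom_eq_bot_iff,
    commutator_map_inl_ker_eq_bot_iff hc]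

/-- for a surjective morphism `f` of precrossed `B`-modules, the Peiffer
commutator `⟨ker f, ⊤⟩` is trivial iff, in the semidirect product `X ⋊[ξ] B`
(the associated reflexive graph), the image `K₁` of `ker f` under `inl` has trivial
commutator with both `ker d` and `ker c`, where `d (x, b) = b` and `c (x, b) = δ x * b`. -/
theorem peiffer_trivial_iff_commutators_trivial
    (δ : X →* B) (ξ : B →* MulAut X) (hpre : IsPrecrossedMod δ ξ)
    (δ' : Y →* B) (ξ' : B →* MulAut Y) (hpre' : IsPrecrossedMod δ' ξ')
    (f : X →* Y) (hf : Function.Surjective f) (hfhom : IsPXModHom δ ξ δ' ξ' f)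
    (c : X ⋊[ξ] B →* B) (hc : ∀ (x : X) (b : B), c ⟨x, b⟩ = δ x * b) :
    peifferCommutator δ ξ f.ker ⊤ = ⊥ ↔
      (⁅Subgroup.map (SemidirectProduct.inl : X →* X ⋊[ξ] B) f.ker,
          (SemidirectProduct.rightHom : X ⋊[ξ] B →* B).ker⁆ = ⊥ ∧
       ⁅Subgroup.map (SemidirectProduct.inl : X →* X ⋊[ξ] B) f.ker, c.ker⁆ = ⊥) :=
  peiffer_trivial_iff_commutators_trivial_general δ ξ δ' ξ' f hfhom c hc
end

section
/- Let f : (X, ∂, ξ) → (Y, ∂', ξ') be a surjective morphism of precrossed B-modules of groups with kernel K = ker f. Then the Peiffer commutator ⟨K, ⊤⟩ is a normal B-invariant subgroup of X contained in K, f induces a surjective morphism of precrossed B-modules f̄ : X/⟨K, ⊤⟩ → Y, and the Peiffer commutator ⟨ker f̄, ⊤⟩ in X/⟨K, ⊤⟩ is trivial. -/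
variable {B X Y Z : Type*} [Group B] [Group X] [Group Y] [Group Z]

/-- for a surjective morphism `f : X → Y` of precrossed `B`-modules with
kernel `K = ker f`, the Peiffer commutator `⟨K, ⊤⟩` is a normal `B`-invariant subgroup
contained in `K`, and `f` induces a surjective morphism of precrossed `B`-modules
`f̄ : X/⟨K, ⊤⟩ → Y` whose Peiffer commutator `⟨ker f̄, ⊤⟩` is trivial. -/
theorem centralization_of_extension
    (δ : X →* B) (ξ : B →* MulAut X) (hpre : IsPrecrossedMod δ ξ)
    (δ' : Y →* B) (ξ' : B →* MulAut Y) (hpre' : IsPrecrossedMod δ' ξ')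
    (f : X →* Y) (hf : Function.Surjective f) (hfhom : IsPXModHom δ ξ δ' ξ' f) :
    (peifferCommutator δ ξ f.ker ⊤).Normal ∧
    IsBInvariant ξ (peifferCommutator δ ξ f.ker ⊤) ∧
    peifferCommutator δ ξ f.ker ⊤ ≤ f.ker ∧
    ∀ hn : (peifferCommutator δ ξ f.ker ⊤).Normal,
      letI := hn
      ∃ (δb : X ⧸ peifferCommutator δ ξ f.ker ⊤ →* B)
        (ξb : B →* MulAut (X ⧸ peifferCommutator δ ξ f.ker ⊤))
        (fbar : X ⧸ peifferCommutator δ ξ f.ker ⊤ →* Y),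
        (∀ x : X, δb (QuotientGroup.mk x) = δ x) ∧
        (∀ (b : B) (x : X), ξb b (QuotientGroup.mk x) = QuotientGroup.mk (ξ b x)) ∧
        IsPrecrossedMod δb ξb ∧
        (∀ x : X, fbar (QuotientGroup.mk x) = f x) ∧
        Function.Surjective fbar ∧
        IsPXModHom δb ξb δ' ξ' fbar ∧
        peifferCommutator δb ξb fbar.ker ⊤ = ⊥ := by

  classical
  set P := peifferCommutator δ ξ f.ker ⊤ with hPdef
  -- basic facts
  have comp : ∀ (u v : B) (x : X), ξ u (ξ v x) = ξ (u * v) x := by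
    intro u v x; rw [map_mul]; rfl
  have hδK : ∀ k ∈ f.ker, δ k = 1 := by
    intro k hk
    rw [← hfhom.1 k, MonoidHom.mem_ker.1 hk, map_one]
  have hKinv : ∀ (b : B), ∀ k ∈ f.ker, ξ b k ∈ f.ker := by
    intro b k hk
    rw [MonoidHom.mem_ker, hfhom.2 b k, MonoidHom.mem_ker.1 hk, map_one]
  -- generators
  have gen1 : ∀ k ∈ f.ker, ∀ n : X, k * n * k⁻¹ * n⁻¹ ∈ P := by
    intro k hk n
    refine Subgroup.subset_closure (Or.inl ⟨k, hk, n, Subgroup.mem_top n, ?_⟩)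
    rw [hδK k hk, map_one, MulAut.one_apply]
  have gen2 : ∀ k ∈ f.ker, ∀ n : X, n * k * n⁻¹ * (ξ (δ n) k)⁻¹ ∈ P := by
    intro k hk n
    exact Subgroup.subset_closure (Or.inr ⟨k, hk, n, Subgroup.mem_top n, rfl⟩)
  have comm2 : ∀ k ∈ f.ker, ∀ n : X, n * k * n⁻¹ * k⁻¹ ∈ P := by
    intro k hk n
    have h := inv_mem (gen1 k hk n)
    rwa [show (k * n * k⁻¹ * n⁻¹)⁻¹ = n * k * n⁻¹ * k⁻¹ by group] at h
  have lem3 : ∀ k ∈ f.ker, ∀ n : X, ξ (δ n) k * k⁻¹ ∈ P := by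
    intro k hk n
    have h := mul_mem (inv_mem (gen2 k hk n)) (comm2 k hk n)
    rwa [show (n * k * n⁻¹ * (ξ (δ n) k)⁻¹)⁻¹ * (n * k * n⁻¹ * k⁻¹)
        = ξ (δ n) k * k⁻¹ by group] at h
  -- action compatibility
  have hact : ∀ (b : B) (m n : X), ξ (δ (ξ b m)) (ξ b n) = ξ b (ξ (δ m) n) := by
    intro b m n
    rw [comp, comp, hpre b m, show b * δ m * b⁻¹ * b = b * δ m by group]
  -- (1) Normality
  have hnormal : P.Normal := by
    refine ⟨fun p hp => ?_⟩
    refine Subgroup.closure_induction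
      (p := fun x _ => ∀ g : X, g * x * g⁻¹ ∈ P) ?_ ?_ ?_ ?_ hp
    · rintro x (⟨m, hm, n, -, rfl⟩ | ⟨m, hm, n, -, rfl⟩) <;> intro g
      · have hm1 : δ m = 1 := hδK m hm
        rw [hm1, map_one, MulAut.one_apply,
          show g * (m * n * m⁻¹ * n⁻¹) * g⁻¹
            = (g * m * g⁻¹) * (g * n * g⁻¹) * (g * m * g⁻¹)⁻¹ * (g * n * g⁻¹)⁻¹ by group]
        exact gen1 _ ((MonoidHom.normal_ker f).conj_mem m hm g) _
      · have hm' : g * m * g⁻¹ ∈ f.ker := (MonoidHom.normal_ker f).conj_mem m hm g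
        have hW : ξ (δ n) m ∈ f.ker := hKinv _ m hm
        have hA : ξ (δ (g * n * g⁻¹)) (g * m * g⁻¹) ∈ f.ker := hKinv _ _ hm'
        have t1 := gen2 _ hm' (g * n * g⁻¹)
        have t3 : g * (ξ (δ n) m)⁻¹ * g⁻¹ * (ξ (δ n) m) ∈ P := by
          have h3 := inv_mem (gen1 _ (inv_mem hW) g)
          rwa [show ((ξ (δ n) m)⁻¹ * g * ((ξ (δ n) m)⁻¹)⁻¹ * g⁻¹)⁻¹
            = g * (ξ (δ n) m)⁻¹ * g⁻¹ * (ξ (δ n) m) by group] at h3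
        have t2 := gen1 _ hA (g * (ξ (δ n) m)⁻¹ * g⁻¹ * (ξ (δ n) m))
        have hb' : δ (ξ (δ (g * n * g⁻¹)) g) * δ (g * n * g⁻¹) = δ g * δ n := by
          rw [hpre, map_mul δ (g * n) g⁻¹, map_mul δ g n, map_inv δ g]; group
        have hD : ξ (δ (ξ (δ (g * n * g⁻¹)) g)) (ξ (δ (g * n * g⁻¹)) m)
            = ξ (δ g) (ξ (δ n) m) := by
          rw [comp, comp, hb']
        have hA2 : ξ (δ (g * n * g⁻¹)) (g * m * g⁻¹)
            = ξ (δ (g * n * g⁻¹)) g * ξ (δ (g * n * g⁻¹)) m * (ξ (δ (g * n * g⁻¹)) g)⁻¹ := by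
          rw [map_mul (ξ (δ (g * n * g⁻¹))) (g * m) g⁻¹,
            map_mul (ξ (δ (g * n * g⁻¹))) g m, map_inv (ξ (δ (g * n * g⁻¹))) g]
        have t4 : ξ (δ (g * n * g⁻¹)) (g * m * g⁻¹) * (ξ (δ g) (ξ (δ n) m))⁻¹ ∈ P := by
          have e3 := gen2 _ (hKinv (δ (g * n * g⁻¹)) m hm) (ξ (δ (g * n * g⁻¹)) g)
          rw [hD] at e3
          rw [hA2]
          exact e3
        have t5 : ξ (δ g) (ξ (δ n) m) * (ξ (δ n) m)⁻¹ ∈ P := lem3 _ hW g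
        have total := mul_mem (mul_mem (mul_mem (mul_mem t1 t2) t3) t4) t5
        rwa [show ((g * n * g⁻¹) * (g * m * g⁻¹) * (g * n * g⁻¹)⁻¹
              * (ξ (δ (g * n * g⁻¹)) (g * m * g⁻¹))⁻¹)
            * (ξ (δ (g * n * g⁻¹)) (g * m * g⁻¹)
              * (g * (ξ (δ n) m)⁻¹ * g⁻¹ * (ξ (δ n) m))
              * (ξ (δ (g * n * g⁻¹)) (g * m * g⁻¹))⁻¹
              * (g * (ξ (δ n) m)⁻¹ * g⁻¹ * (ξ (δ n) m))⁻¹)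
            * (g * (ξ (δ n) m)⁻¹ * g⁻¹ * (ξ (δ n) m))
            * (ξ (δ (g * n * g⁻¹)) (g * m * g⁻¹) * (ξ (δ g) (ξ (δ n) m))⁻¹)
            * (ξ (δ g) (ξ (δ n) m) * (ξ (δ n) m)⁻¹)
            = g * (n * m * n⁻¹ * (ξ (δ n) m)⁻¹) * g⁻¹ by group] at total
    · intro g; simpa using one_mem P
    · intro x y _ _ hx hy g
      rw [show g * (x * y) * g⁻¹ = (g * x * g⁻¹) * (g * y * g⁻¹) by group]
      exact mul_mem (hx g) (hy g)
    · intro x _ hx g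
      rw [show g * x⁻¹ * g⁻¹ = (g * x * g⁻¹)⁻¹ by group]
      exact inv_mem (hx g)
  -- (2) B-invariance
  have hBinv : IsBInvariant ξ P := by
    intro b p hp
    refine Subgroup.closure_induction (p := fun x _ => ξ b x ∈ P) ?_ ?_ ?_ ?_ hp
    · rintro x (⟨m, hm, n, -, rfl⟩ | ⟨m, hm, n, -, rfl⟩)
      · have he : ξ b (m * n * m⁻¹ * (ξ (δ m) n)⁻¹)
            = ξ b m * ξ b n * (ξ b m)⁻¹ * (ξ (δ (ξ b m)) (ξ b n))⁻¹ := by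
          simp only [map_mul, map_inv, hact]
        exact Subgroup.subset_closure
          (Or.inl ⟨ξ b m, hKinv b m hm, ξ b n, Subgroup.mem_top _, he⟩)
      · have he : ξ b (n * m * n⁻¹ * (ξ (δ n) m)⁻¹)
            = ξ b n * ξ b m * (ξ b n)⁻¹ * (ξ (δ (ξ b n)) (ξ b m))⁻¹ := by
          simp only [map_mul, map_inv, hact]
        exact Subgroup.subset_closure
          (Or.inr ⟨ξ b m, hKinv b m hm, ξ b n, Subgroup.mem_top _, he⟩)
    · simpa using one_mem P
    · intro x y _ _ hx hy; rw [map_mul]; exact mul_mem hx hy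
    · intro x _ hx; rw [map_inv]; exact inv_mem hx
  -- (3) P ≤ ker f
  have hPK : P ≤ f.ker := by
    refine (Subgroup.closure_le f.ker).2 ?_
    rintro x (⟨m, hm, n, -, rfl⟩ | ⟨m, hm, n, -, rfl⟩) <;>
      · have h1 : f m = 1 := MonoidHom.mem_ker.1 hm
        simp only [SetLike.mem_coe, MonoidHom.mem_ker, map_mul, map_inv, hfhom.2,
          h1, hδK m hm, map_one, MulAut.one_apply, one_mul, mul_one, inv_one]
        group
  refine ⟨hnormal, hBinv, hPK, ?_⟩
  intro hn
  haveI := hn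
  have hPδ : P ≤ δ.ker := fun x hx => MonoidHom.mem_ker.2 (hδK x (hPK hx))
  -- the induced action on the quotient
  let q : B → (X ⧸ P →* X ⧸ P) := fun b =>
    QuotientGroup.map P P (ξ b).toMonoidHom (fun x hx => hBinv b x hx)
  have q_mk : ∀ (b : B) (x : X), q b (QuotientGroup.mk x) = QuotientGroup.mk (ξ b x) :=
    fun b x => QuotientGroup.map_mk P P (ξ b).toMonoidHom _ x
  have q_comp : ∀ (b c : B) (z : X ⧸ P), q (b * c) z = q b (q c z) := by
    intro b c z
    refine QuotientGroup.induction_on z fun x => ?_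
    rw [q_mk, q_mk, q_mk, comp]
  let ξb : B →* MulAut (X ⧸ P) := MonoidHom.mk' (fun b =>
    { toFun := q b
      invFun := q b⁻¹
      left_inv := fun z => by
        rw [← q_comp, inv_mul_cancel]
        refine QuotientGroup.induction_on z fun x => ?_
        rw [q_mk, map_one, MulAut.one_apply]
      right_inv := fun z => by
        rw [← q_comp, mul_inv_cancel]
        refine QuotientGroup.induction_on z fun x => ?_
        rw [q_mk, map_one, MulAut.one_apply]
      map_mul' := (q b).map_mul })
    (fun b c => MulEquiv.ext fun z => q_comp b c z)
  have ξb_mk : ∀ (b : B) (x : X), ξb b (QuotientGroup.mk x) = QuotientGroup.mk (ξ b x) :=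
    fun b x => q_mk b x
  have δb_mk : ∀ x : X, QuotientGroup.lift P δ hPδ (QuotientGroup.mk x) = δ x :=
    fun x => QuotientGroup.lift_mk' P hPδ x
  have fbar_mk : ∀ x : X, QuotientGroup.lift P f hPK (QuotientGroup.mk x) = f x :=
    fun x => QuotientGroup.lift_mk' P hPK x
  refine ⟨QuotientGroup.lift P δ hPδ, ξb, QuotientGroup.lift P f hPK,
    δb_mk, ξb_mk, ?_, fbar_mk, ?_, ⟨?_, ?_⟩, ?_⟩
  · -- IsPrecrossedMod
    intro b z
    refine QuotientGroup.induction_on z fun x => ?_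
    rw [ξb_mk, δb_mk, δb_mk, hpre]
  · -- surjective
    intro y
    obtain ⟨x, rfl⟩ := hf y
    exact ⟨QuotientGroup.mk x, fbar_mk x⟩
  · -- compatible with δ'
    intro z
    refine QuotientGroup.induction_on z fun x => ?_
    rw [fbar_mk, δb_mk, hfhom.1]
  · -- compatible with actions
    intro b z
    refine QuotientGroup.induction_on z fun x => ?_
    rw [ξb_mk, fbar_mk, fbar_mk, hfhom.2]
  · -- trivial Peiffer commutator in the quotient
    rw [eq_bot_iff]
    refine (Subgroup.closure_le ⊥).2 ?_
    rintro z (⟨mq, hmq, nq, -, rfl⟩ | ⟨mq, hmq, nq, -, rfl⟩)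
    · obtain ⟨m, rfl⟩ := QuotientGroup.mk_surjective mq
      obtain ⟨n, rfl⟩ := QuotientGroup.mk_surjective nq
      have hmK : m ∈ f.ker := by
        rw [MonoidHom.mem_ker, ← fbar_mk m]
        exact MonoidHom.mem_ker.1 hmq
      simp only [SetLike.mem_coe, Subgroup.mem_bot]
      rw [δb_mk, ξb_mk]
      exact (QuotientGroup.eq_one_iff (m * n * m⁻¹ * (ξ (δ m) n)⁻¹)).2
        (Subgroup.subset_closure (Or.inl ⟨m, hmK, n, Subgroup.mem_top n, rfl⟩))
    · obtain ⟨m, rfl⟩ := QuotientGroup.mk_surjective mq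
      obtain ⟨n, rfl⟩ := QuotientGroup.mk_surjective nq
      have hmK : m ∈ f.ker := by
        rw [MonoidHom.mem_ker, ← fbar_mk m]
        exact MonoidHom.mem_ker.1 hmq
      simp only [SetLike.mem_coe, Subgroup.mem_bot]
      rw [δb_mk, ξb_mk]
      exact (QuotientGroup.eq_one_iff (n * m * n⁻¹ * (ξ (δ n) m)⁻¹)).2
        (Subgroup.subset_closure (Or.inr ⟨m, hmK, n, Subgroup.mem_top n, rfl⟩))
end

section
/- Let f : (X, ∂, ξ) → (Y, ∂', ξ') be a surjective morphism of precrossed B-modules of groups, let η : X → X/⟨ker f, ⊤⟩ be the quotient by the Peiffer commutator of ker f with X, and let f̄ : X/⟨ker f, ⊤⟩ → Y be the induced morphism. For every surjective morphism of precrossed B-modules g : (Z, ∂'', ξ'') → (Y, ∂', ξ') with trivial Peiffer commutator ⟨ker g, ⊤⟩ = ⊥, and every morphism of precrossed B-modules h : X → Z with g ∘ h = f, there exists a unique morphism of precrossed B-modules h̄ : X/⟨ker f, ⊤⟩ → Z with h̄ ∘ η = h. -/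
variable {B X Y Z : Type*} [Group B] [Group X] [Group Y] [Group Z]

/- A morphism `h` over `Y` from `f` to a central extension `g` maps `⟨ker f, X⟩` into
`⟨ker g, Z⟩ = ⊥`, since morphisms carry Peiffer elements to Peiffer elements; so `h` factors
through the quotient, and the factorization is unique because `X → X/⟨ker f, X⟩` is onto. -/

theorem IsPXModHom.map_peifferElement {δ : X →* B} {ξ : B →* MulAut X} {δ' : Y →* B}
    {ξ' : B →* MulAut Y} {φ : X →* Y} (hφ : IsPXModHom δ ξ δ' ξ' φ) (m n : X) :
    φ (m * n * m⁻¹ * (ξ (δ m) n)⁻¹) = φ m * φ n * (φ m)⁻¹ * (ξ' (δ' (φ m)) (φ n))⁻¹ := by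
  simp only [map_mul, map_inv, hφ.1, hφ.2]

theorem peifferCommutator_le_comap {δ : X →* B} {ξ : B →* MulAut X} {δ' : Y →* B}
    {ξ' : B →* MulAut Y} {φ : X →* Y} (hφ : IsPXModHom δ ξ δ' ξ' φ)
    {M N : Subgroup X} {M' N' : Subgroup Y} (hM : M ≤ M'.comap φ) (hN : N ≤ N'.comap φ) :
    peifferCommutator δ ξ M N ≤ (peifferCommutator δ' ξ' M' N').comap φ := by
  rw [peifferCommutator, Subgroup.closure_le]
  rintro _ (⟨m, hm, n, hn, rfl⟩ | ⟨m, hm, n, hn, rfl⟩) <;>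
    rw [SetLike.mem_coe, Subgroup.mem_comap, hφ.map_peifferElement] <;>
    apply Subgroup.subset_closure
  · exact .inl ⟨φ m, hM hm, φ n, hN hn, rfl⟩
  · exact .inr ⟨φ m, hM hm, φ n, hN hn, rfl⟩

theorem peifferCommutator_ker_top_le_ker {δ : X →* B} {ξ : B →* MulAut X} {δ' : Z →* B}
    {ξ' : B →* MulAut Z} {f : X →* Y} {g : Z →* Y} {h : X →* Z}
    (hh : IsPXModHom δ ξ δ' ξ' h) (hcomm : ∀ x, g (h x) = f x)
    (hg : peifferCommutator δ' ξ' g.ker ⊤ = ⊥) :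
    peifferCommutator δ ξ f.ker ⊤ ≤ h.ker := by
  have hker : f.ker ≤ g.ker.comap h := fun x hx => by
    rwa [Subgroup.mem_comap, MonoidHom.mem_ker, hcomm]
  simpa [hg, MonoidHom.comap_bot] using
    peifferCommutator_le_comap hh hker (Subgroup.comap_top h).ge

theorem IsPXModHom.quotientLift {N : Subgroup X} [N.Normal] {δ : X →* B} {ξ : B →* MulAut X}
    {δb : X ⧸ N →* B} {ξb : B →* MulAut (X ⧸ N)} {δ' : Z →* B} {ξ' : B →* MulAut Z}
    (hδb : ∀ x : X, δb x = δ x) (hξb : ∀ (b : B) (x : X), ξb b x = ξ b x)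
    {φ : X →* Z} (hφ : IsPXModHom δ ξ δ' ξ' φ) (hN : N ≤ φ.ker) :
    IsPXModHom δb ξb δ' ξ' (QuotientGroup.lift N φ hN) := by
  constructor
  · intro q
    induction q using QuotientGroup.induction_on with
    | H x => rw [hδb]; exact hφ.1 x
  · intro b q
    induction q using QuotientGroup.induction_on with
    | H x => rw [hξb]; exact hφ.2 b x

theorem centralization_universal_general
    (δ : X →* B) (ξ : B →* MulAut X)
    (f : X →* Y)
    [hn : (peifferCommutator δ ξ f.ker ⊤).Normal]
    -- the induced precrossed `B`-module structure on the quotient `X/⟨ker f, ⊤⟩`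
    (δb : X ⧸ peifferCommutator δ ξ f.ker ⊤ →* B)
    (hδb : ∀ x : X, δb (QuotientGroup.mk x) = δ x)
    (ξb : B →* MulAut (X ⧸ peifferCommutator δ ξ f.ker ⊤))
    (hξb : ∀ (b : B) (x : X), ξb b (QuotientGroup.mk x) = QuotientGroup.mk (ξ b x))
    -- a central extension `g : Z → Y`
    (δ'' : Z →* B) (ξ'' : B →* MulAut Z)
    (g : Z →* Y)
    (hgcentral : peifferCommutator δ'' ξ'' g.ker ⊤ = ⊥)
    -- a morphism `h` from `f` to `g`
    (h : X →* Z) (hhhom : IsPXModHom δ ξ δ'' ξ'' h) (hcomm : ∀ x : X, g (h x) = f x) :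
    ∃! hbar : X ⧸ peifferCommutator δ ξ f.ker ⊤ →* Z,
      IsPXModHom δb ξb δ'' ξ'' hbar ∧ ∀ x : X, hbar (QuotientGroup.mk x) = h x := by
  have hker := peifferCommutator_ker_top_le_ker hhhom hcomm hgcentral
  refine ⟨QuotientGroup.lift _ h hker, ⟨hhhom.quotientLift hδb hξb hker, fun _ => rfl⟩, ?_⟩
  rintro k ⟨-, hk⟩
  exact QuotientGroup.monoidHom_ext _ (MonoidHom.ext hk)

/-- universal property of the centralization: any morphism `h` from the
extension `f` to a central extension `g` (i.e. one with `⟨ker g, ⊤⟩ = ⊥`) factors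
uniquely through the quotient `η : X → X/⟨ker f, ⊤⟩`. -/
theorem centralization_universal
    (δ : X →* B) (ξ : B →* MulAut X) (hpre : IsPrecrossedMod δ ξ)
    (δ' : Y →* B) (ξ' : B →* MulAut Y) (hpre' : IsPrecrossedMod δ' ξ')
    (f : X →* Y) (hf : Function.Surjective f) (hfhom : IsPXModHom δ ξ δ' ξ' f)
    [hn : (peifferCommutator δ ξ f.ker ⊤).Normal]
    (hinv : IsBInvariant ξ (peifferCommutator δ ξ f.ker ⊤))
    -- the induced precrossed `B`-module structure on the quotient `X/⟨ker f, ⊤⟩`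
    (δb : X ⧸ peifferCommutator δ ξ f.ker ⊤ →* B)
    (hδb : ∀ x : X, δb (QuotientGroup.mk x) = δ x)
    (ξb : B →* MulAut (X ⧸ peifferCommutator δ ξ f.ker ⊤))
    (hξb : ∀ (b : B) (x : X), ξb b (QuotientGroup.mk x) = QuotientGroup.mk (ξ b x))
    -- a central extension `g : Z → Y`
    (δ'' : Z →* B) (ξ'' : B →* MulAut Z) (hpre'' : IsPrecrossedMod δ'' ξ'')
    (g : Z →* Y) (hg : Function.Surjective g) (hghom : IsPXModHom δ'' ξ'' δ' ξ' g)
    (hgcentral : peifferCommutator δ'' ξ'' g.ker ⊤ = ⊥)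
    -- a morphism `h` from `f` to `g`
    (h : X →* Z) (hhhom : IsPXModHom δ ξ δ'' ξ'' h) (hcomm : ∀ x : X, g (h x) = f x) :
    ∃! hbar : X ⧸ peifferCommutator δ ξ f.ker ⊤ →* Z,
      IsPXModHom δb ξb δ'' ξ'' hbar ∧ ∀ x : X, hbar (QuotientGroup.mk x) = h x :=
  centralization_universal_general δ ξ f (hn := hn) δb hδb ξb hξb δ'' ξ'' g hgcentral h hhhom hcomm
end

section
/- Let g : (X, ∂, ξ) → (Y, ∂', ξ') be a surjective morphism of precrossed B-modules of groups with kernel K = ker g. Then g maps the Peiffer commutator ⟨⊤, ⊤⟩ of X into the Peiffer commutator ⟨⊤, ⊤⟩ of Y; the induced map ḡ : X/⟨⊤, ⊤⟩ → Y/⟨⊤, ⊤⟩ between the quotients by these Peiffer commutators is surjective; and the kernel of ḡ equals the image of K under the quotient map X → X/⟨⊤, ⊤⟩. (This is the exactness of the tail K/⟨K, X⟩ → X/⟨X, X⟩ → Y/⟨Y, Y⟩ → 1 of the five-term sequence.) -/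
variable {B X Y Z : Type*} [Group B] [Group X] [Group Y] [Group Z]

/-- for a surjective morphism `g : X → Y` of precrossed `B`-modules with
kernel `K = ker g`, `g` maps `⟨⊤, ⊤⟩_X` into `⟨⊤, ⊤⟩_Y`, the induced map
`ḡ : X/⟨⊤, ⊤⟩ → Y/⟨⊤, ⊤⟩` is surjective, and its kernel is the image of `K` under the
quotient map `X → X/⟨⊤, ⊤⟩`. -/
theorem five_term_tail_exact
    (δ : X →* B) (ξ : B →* MulAut X) (hpre : IsPrecrossedMod δ ξ)
    (δ' : Y →* B) (ξ' : B →* MulAut Y) (hpre' : IsPrecrossedMod δ' ξ')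
    (g : X →* Y) (hg : Function.Surjective g) (hghom : IsPXModHom δ ξ δ' ξ' g)
    [hnX : (peifferCommutator δ ξ ⊤ ⊤).Normal]
    [hnY : (peifferCommutator δ' ξ' ⊤ ⊤).Normal] :
    Subgroup.map g (peifferCommutator δ ξ ⊤ ⊤) ≤ peifferCommutator δ' ξ' ⊤ ⊤ ∧
    ∃ gbar : X ⧸ peifferCommutator δ ξ ⊤ ⊤ →* Y ⧸ peifferCommutator δ' ξ' ⊤ ⊤,
      (∀ x : X, gbar (QuotientGroup.mk x) = QuotientGroup.mk (g x)) ∧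
      Function.Surjective gbar ∧
      gbar.ker = Subgroup.map (QuotientGroup.mk' (peifferCommutator δ ξ ⊤ ⊤)) g.ker := by
  obtain ⟨hδ, hξ⟩ := hghom
  have himg : Subgroup.map g (peifferCommutator δ ξ ⊤ ⊤) = peifferCommutator δ' ξ' ⊤ ⊤ := by
    unfold peifferCommutator
    rw [MonoidHom.map_closure]
    congr 1
    ext y
    constructor
    · rintro ⟨x, hx, rfl⟩
      rcases hx with ⟨m, -, n, -, rfl⟩ | ⟨m, -, n, -, rfl⟩
      · left
        exact ⟨g m, trivial, g n, trivial, by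
          simp [hξ, hδ, map_mul, map_inv]⟩
      · right
        exact ⟨g m, trivial, g n, trivial, by
          simp [hξ, hδ, map_mul, map_inv]⟩
    · rintro (⟨m', -, n', -, rfl⟩ | ⟨m', -, n', -, rfl⟩)
      · obtain ⟨m, rfl⟩ := hg m'
        obtain ⟨n, rfl⟩ := hg n'
        exact ⟨m * n * m⁻¹ * (ξ (δ m) n)⁻¹, Or.inl ⟨m, trivial, n, trivial, rfl⟩, by
          simp [hξ, hδ, map_mul, map_inv]⟩
      · obtain ⟨m, rfl⟩ := hg m'
        obtain ⟨n, rfl⟩ := hg n'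
        exact ⟨n * m * n⁻¹ * (ξ (δ n) m)⁻¹, Or.inr ⟨m, trivial, n, trivial, rfl⟩, by
          simp [hξ, hδ, map_mul, map_inv]⟩
  refine ⟨himg.le, ?_⟩
  set PX := peifferCommutator δ ξ ⊤ ⊤
  set PY := peifferCommutator δ' ξ' ⊤ ⊤
  have hle : PX ≤ Subgroup.comap g PY := by
    rw [← Subgroup.map_le_iff_le_comap]; exact himg.le
  refine ⟨QuotientGroup.map PX PY g hle, fun x => rfl, ?_, ?_⟩
  · intro y
    obtain ⟨y', rfl⟩ := QuotientGroup.mk_surjective y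
    obtain ⟨x, rfl⟩ := hg y'
    exact ⟨QuotientGroup.mk x, rfl⟩
  · ext q
    obtain ⟨x, rfl⟩ := QuotientGroup.mk_surjective q
    simp only [MonoidHom.mem_ker, Subgroup.mem_map]
    constructor
    · intro h
      have hgx : g x ∈ PY := by
        rwa [QuotientGroup.map_mk, QuotientGroup.eq_one_iff] at h
      rw [← himg] at hgx
      obtain ⟨p, hp, hpg⟩ := hgx
      refine ⟨x * p⁻¹, ?_, ?_⟩
      · simp [MonoidHom.mem_ker, hpg]
      · simp only [QuotientGroup.mk'_apply]
        rw [QuotientGroup.eq]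
        simpa using hp
    · rintro ⟨k, hk, hkq⟩
      have : (QuotientGroup.map PX PY g hle) ((QuotientGroup.mk' PX) k) = 1 := by
        simp [QuotientGroup.map_mk, QuotientGroup.eq_one_iff,
          MonoidHom.mem_ker.mp hk]
      rw [hkq] at this
      exact this
end

section
/- Let f : (X, ∂, ξ) → (Y, ∂', ξ') and g : (X, ∂, ξ) → (Z, ∂'', ξ'') be surjective morphisms of precrossed B-modules of groups, and set J = ⟨ker f ⊓ ker g, ⊤⟩ ⊔ ⟨ker f, ker g⟩ (a normal B-invariant subgroup of X contained in ker f ⊓ ker g). Let f̄ : X/J → Y and ḡ : X/J → Z be the induced surjective morphisms of precrossed B-modules. Then in X/J the Peiffer commutators ⟨ker f̄ ⊓ ker ḡ, ⊤⟩ and ⟨ker f̄, ker ḡ⟩ are both trivial. -/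
variable {B X Y Z : Type*} [Group B] [Group X] [Group Y] [Group Z]

/-- quotienting by `J = ⟨ker f ⊓ ker g, ⊤⟩ ⊔ ⟨ker f, ker g⟩` centralizes
the double extension: in `X/J` the Peiffer commutators `⟨ker f̄ ⊓ ker ḡ, ⊤⟩` and
`⟨ker f̄, ker ḡ⟩` are both trivial. -/
theorem double_centralization
    (δ : X →* B) (ξ : B →* MulAut X) (hpre : IsPrecrossedMod δ ξ)
    (δ' : Y →* B) (ξ' : B →* MulAut Y) (hpre' : IsPrecrossedMod δ' ξ')
    (δ'' : Z →* B) (ξ'' : B →* MulAut Z) (hpre'' : IsPrecrossedMod δ'' ξ'')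
    (f : X →* Y) (hf : Function.Surjective f) (hfhom : IsPXModHom δ ξ δ' ξ' f)
    (g : X →* Z) (hg : Function.Surjective g) (hghom : IsPXModHom δ ξ δ'' ξ'' g)
    -- `J` is a normal `B`-invariant subgroup of `X` contained in `ker f ⊓ ker g`
    [hn : (peifferCommutator δ ξ (f.ker ⊓ g.ker) ⊤ ⊔ peifferCommutator δ ξ f.ker g.ker).Normal]
    (hinv : IsBInvariant ξ
      (peifferCommutator δ ξ (f.ker ⊓ g.ker) ⊤ ⊔ peifferCommutator δ ξ f.ker g.ker))
    (hle : peifferCommutator δ ξ (f.ker ⊓ g.ker) ⊤ ⊔ peifferCommutator δ ξ f.ker g.ker ≤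
      f.ker ⊓ g.ker)
    -- the induced precrossed `B`-module structure on `X/J`
    (δb : X ⧸ (peifferCommutator δ ξ (f.ker ⊓ g.ker) ⊤ ⊔ peifferCommutator δ ξ f.ker g.ker) →* B)
    (hδb : ∀ x : X, δb (QuotientGroup.mk x) = δ x)
    (ξb : B →* MulAut
      (X ⧸ (peifferCommutator δ ξ (f.ker ⊓ g.ker) ⊤ ⊔ peifferCommutator δ ξ f.ker g.ker)))
    (hξb : ∀ (b : B) (x : X), ξb b (QuotientGroup.mk x) = QuotientGroup.mk (ξ b x))
    (hpreb : IsPrecrossedMod δb ξb)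
    -- the induced surjective morphisms `f̄ : X/J → Y` and `ḡ : X/J → Z`
    (fbar : X ⧸ (peifferCommutator δ ξ (f.ker ⊓ g.ker) ⊤ ⊔ peifferCommutator δ ξ f.ker g.ker) →* Y)
    (hfbar : ∀ x : X, fbar (QuotientGroup.mk x) = f x)
    (hfbars : Function.Surjective fbar) (hfbarhom : IsPXModHom δb ξb δ' ξ' fbar)
    (gbar : X ⧸ (peifferCommutator δ ξ (f.ker ⊓ g.ker) ⊤ ⊔ peifferCommutator δ ξ f.ker g.ker) →* Z)
    (hgbar : ∀ x : X, gbar (QuotientGroup.mk x) = g x)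
    (hgbars : Function.Surjective gbar) (hgbarhom : IsPXModHom δb ξb δ'' ξ'' gbar) :
    peifferCommutator δb ξb (fbar.ker ⊓ gbar.ker) ⊤ = ⊥ ∧
    peifferCommutator δb ξb fbar.ker gbar.ker = ⊥ := by
  set J := peifferCommutator δ ξ (f.ker ⊓ g.ker) ⊤ ⊔ peifferCommutator δ ξ f.ker g.ker with hJ
  have hmk1 : ∀ x : X, x ∈ J → (QuotientGroup.mk x : X ⧸ J) = 1 :=
    fun x hx => (QuotientGroup.eq_one_iff x).mpr hx
  have hcalc : ∀ m n : X,
      (QuotientGroup.mk m : X ⧸ J) * QuotientGroup.mk n * (QuotientGroup.mk m)⁻¹ *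
        (ξb (δb (QuotientGroup.mk m)) (QuotientGroup.mk n))⁻¹ =
      QuotientGroup.mk (m * n * m⁻¹ * (ξ (δ m) n)⁻¹) := by
    intro m n
    rw [hδb, hξb]
    rfl
  constructor
  · rw [eq_bot_iff]
    refine (Subgroup.closure_le _).mpr ?_
    rintro y (⟨m, hm, n, -, rfl⟩ | ⟨m, hm, n, -, rfl⟩) <;>
    · obtain ⟨mx, rfl⟩ := QuotientGroup.mk_surjective m
      obtain ⟨nx, rfl⟩ := QuotientGroup.mk_surjective n
      have hfm : mx ∈ f.ker := by rw [MonoidHom.mem_ker, ← hfbar]; exact hm.1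
      have hgm : mx ∈ g.ker := by rw [MonoidHom.mem_ker, ← hgbar]; exact hm.2
      simp only [SetLike.mem_coe, Subgroup.mem_bot]
      rw [hcalc]
      first
      | exact hmk1 _ (le_sup_left (α := Subgroup X)
          (Subgroup.subset_closure (Or.inl ⟨mx, ⟨hfm, hgm⟩, nx, trivial, rfl⟩)))
      | exact hmk1 _ (le_sup_left (α := Subgroup X)
          (Subgroup.subset_closure (Or.inr ⟨mx, ⟨hfm, hgm⟩, nx, trivial, rfl⟩)))
  · rw [eq_bot_iff]
    refine (Subgroup.closure_le _).mpr ?_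
    rintro y (⟨m, hm, n, hn, rfl⟩ | ⟨m, hm, n, hn, rfl⟩) <;>
    · obtain ⟨mx, rfl⟩ := QuotientGroup.mk_surjective m
      obtain ⟨nx, rfl⟩ := QuotientGroup.mk_surjective n
      have hfm : mx ∈ f.ker := by rw [MonoidHom.mem_ker, ← hfbar]; exact hm
      have hgn : nx ∈ g.ker := by rw [MonoidHom.mem_ker, ← hgbar]; exact hn
      simp only [SetLike.mem_coe, Subgroup.mem_bot]
      rw [hcalc]
      first
      | exact hmk1 _ (le_sup_right (α := Subgroup X)
          (Subgroup.subset_closure (Or.inl ⟨mx, hfm, nx, hgn, rfl⟩)))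
      | exact hmk1 _ (le_sup_right (α := Subgroup X)
          (Subgroup.subset_closure (Or.inr ⟨mx, hfm, nx, hgn, rfl⟩)))
end

section
/- Let (X, ∂, ξ) be a precrossed B-module of groups and let H, K be normal subgroups of X, each invariant under the B-action, with H ≤ ker ∂ and K ≤ ker ∂. Then ⟨H ⊓ K, H ⊔ K⟩ ⊔ ⟨H, K⟩ = ⁅H, K⁆, the commutator subgroup of H and K. -/
/-!
Below `ker δ` the action `ξ (δ m)` is trivial, so every Peiffer element is an ordinary commutator
and both Peiffer commutators in the statement are commutator subgroups. It remains to see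
`⁅H ⊓ K, H ⊔ K⁆ ≤ ⁅H, K⁆`: the join `H ⊔ K` normalizes `⁅H, K⁆`, and an element of `H ⊓ K`
commutes modulo `⁅H, K⁆` with `H` and with `K`, hence with all of `H ⊔ K`.
-/

variable {B X Y Z : Type*} [Group B] [Group X] [Group Y] [Group Z]

namespace Subgroup

variable {G : Type*} [Group G]

open scoped commutatorElement

/-- The preimage of the centralizer of `m N` in `normalizer N ⧸ N`. -/
def commuteModulo (N : Subgroup G) (m : G) : Subgroup G where
  carrier := {g | g ∈ normalizer (N : Set G) ∧ ⁅m, g⁆ ∈ N}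
  one_mem' := ⟨one_mem _, by rw [commutatorElement_one_right]; exact one_mem N⟩
  mul_mem' := by
    rintro g₁ g₂ ⟨hg₁, hm₁⟩ ⟨hg₂, hm₂⟩
    refine ⟨mul_mem hg₁ hg₂, ?_⟩
    rw [commutatorElement_mul_right_eq_mul_conj, mul_assoc, mul_assoc, ← mul_assoc g₁]
    exact mul_mem hm₁ ((mem_normalizer_iff.mp hg₁ _).mp hm₂)
  inv_mem' := by
    rintro g ⟨hg, hm⟩
    refine ⟨inv_mem hg, ?_⟩
    rw [commutatorElement_inv_right, ← commutatorElement_inv]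
    exact (mem_normalizer_iff''.mp hg _).mp (inv_mem hm)

theorem commutator_inf_sup_le (H K : Subgroup G) : ⁅H ⊓ K, H ⊔ K⁆ ≤ ⁅H, K⁆ := by
  refine commutator_le.mpr fun m hm g hg => ?_
  have hH : H ≤ commuteModulo ⁅H, K⁆ m := fun h hh =>
    ⟨normalizer_commutator_ge_left H K hh,
      commutator_comm K H ▸ commutator_mem_commutator hm.2 hh⟩
  have hK : K ≤ commuteModulo ⁅H, K⁆ m := fun k hk =>
    ⟨normalizer_commutator_ge_right H K hk, commutator_mem_commutator hm.1 hk⟩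
  exact (sup_le hH hK hg).2

end Subgroup

theorem peifferCommutator_eq_commutator_of_le_ker (δ : X →* B) (ξ : B →* MulAut X)
    {M N : Subgroup X} (hM : M ≤ δ.ker) (hN : N ≤ δ.ker) :
    peifferCommutator δ ξ M N = ⁅M, N⁆ := by
  have act_ker : ∀ x ∈ δ.ker, ∀ y : X, ξ (δ x) y = y := fun x hx y => by
    rw [MonoidHom.mem_ker.mp hx, map_one]; rfl
  apply le_antisymm
  · refine Subgroup.closure_le _ |>.mpr ?_
    rintro y (⟨m, hm, n, hn, rfl⟩ | ⟨m, hm, n, hn, rfl⟩)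
    · rw [act_ker m (hM hm)]
      exact Subgroup.commutator_mem_commutator hm hn
    · rw [act_ker n (hN hn), Subgroup.commutator_comm]
      exact Subgroup.commutator_mem_commutator hn hm
  · refine Subgroup.commutator_le.mpr fun m hm n hn => Subgroup.subset_closure (Or.inl ?_)
    exact ⟨m, hm, n, hn, by rw [act_ker m (hM hm)]; rfl⟩

theorem peiffer_join_eq_commutator_general
    (δ : X →* B) (ξ : B →* MulAut X)
    (H K : Subgroup X)
    (hHker : H ≤ δ.ker) (hKker : K ≤ δ.ker) :
    peifferCommutator δ ξ (H ⊓ K) (H ⊔ K) ⊔ peifferCommutator δ ξ H K = ⁅H, K⁆ := by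
  rw [peifferCommutator_eq_commutator_of_le_ker δ ξ (inf_le_left.trans hHker) (sup_le hHker hKker),
    peifferCommutator_eq_commutator_of_le_ker δ ξ hHker hKker]
  exact sup_eq_right.mpr (Subgroup.commutator_inf_sup_le H K)

/-- for normal `B`-invariant subgroups `H, K ≤ ker δ`,
`⟨H ⊓ K, H ⊔ K⟩ ⊔ ⟨H, K⟩ = ⁅H, K⁆`. -/
theorem peiffer_join_eq_commutator
    (δ : X →* B) (ξ : B →* MulAut X) (hpre : IsPrecrossedMod δ ξ)
    (H K : Subgroup X) (hHn : H.Normal) (hKn : K.Normal)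
    (hHinv : IsBInvariant ξ H) (hKinv : IsBInvariant ξ K)
    (hHker : H ≤ δ.ker) (hKker : K ≤ δ.ker) :
    peifferCommutator δ ξ (H ⊓ K) (H ⊔ K) ⊔ peifferCommutator δ ξ H K = ⁅H, K⁆ :=
  peiffer_join_eq_commutator_general δ ξ H K hHker hKker
end

section
/- Let q : (X, ∂, ξ) → (X', ∂', ξ') be a surjective morphism of precrossed B-modules of Lie algebras over a field k, and let M, N be B-invariant Lie subalgebras of X. Then the image under q of the Peiffer commutator is the Peiffer commutator of the images: q⟨M, N⟩ = ⟨q(M), q(N)⟩ as Lie ideals of X'. -/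
variable {k : Type*} [Field k]
variable {B X Y : Type*} [LieRing B] [LieAlgebra k B]
  [LieRing X] [LieAlgebra k X] [LieRing Y] [LieAlgebra k Y]

/-- `(X, δ, ξ)` is a precrossed `B`-module of Lie algebras:
`ξ : B → Der(X)` is an action by derivations and `δ (ξ b x) = ⁅b, δ x⁆`. -/
def IsLiePrecrossedMod (δ : X →ₗ⁅k⁆ B) (ξ : B →ₗ⁅k⁆ LieDerivation k X X) : Prop :=
  ∀ (b : B) (x : X), δ (ξ b x) = ⁅b, δ x⁆

/-- A `B`-invariant set of elements of `X`. -/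
def IsLieBInvariant (ξ : B →ₗ⁅k⁆ LieDerivation k X X) (M : Set X) : Prop :=
  ∀ (b : B), ∀ m ∈ M, ξ b m ∈ M

/-- The Peiffer commutator `⟨M, N⟩`: the Lie ideal of `X` generated by the Peiffer
elements `⁅m, n⁆ - ξ (δ m) n` and `⁅n, m⁆ - ξ (δ n) m` for `m ∈ M`, `n ∈ N`. -/
def liePeiffer (δ : X →ₗ⁅k⁆ B) (ξ : B →ₗ⁅k⁆ LieDerivation k X X) (M N : Set X) :
    LieIdeal k X :=
  LieSubmodule.lieSpan k X
    ({y | ∃ m ∈ M, ∃ n ∈ N, y = ⁅m, n⁆ - ξ (δ m) n} ∪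
     {y | ∃ m ∈ M, ∃ n ∈ N, y = ⁅n, m⁆ - ξ (δ n) m})

/-- `f` is a morphism of precrossed `B`-modules of Lie algebras. -/
def IsLiePXModHom (δ : X →ₗ⁅k⁆ B) (ξ : B →ₗ⁅k⁆ LieDerivation k X X)
    (δ' : Y →ₗ⁅k⁆ B) (ξ' : B →ₗ⁅k⁆ LieDerivation k Y Y) (f : X →ₗ⁅k⁆ Y) : Prop :=
  (∀ x : X, δ' (f x) = δ x) ∧ ∀ (b : B) (x : X), f (ξ b x) = ξ' b (f x)

/-! The image `LieIdeal.map q I` is the ideal generated by `q '' I`, so it commutes with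
`lieSpan`; and a morphism of precrossed modules carries each Peiffer element of `m, n` to the
Peiffer element of `q m, q n`. -/

theorem LieIdeal.map_lieSpan {R L L' : Type*} [CommRing R] [LieRing L] [LieAlgebra R L]
    [LieRing L'] [LieAlgebra R L'] (f : L →ₗ⁅R⁆ L') (s : Set L) :
    LieIdeal.map f (LieSubmodule.lieSpan R L s) = LieSubmodule.lieSpan R L' (f '' s) := by
  apply le_antisymm
  · rw [LieIdeal.map_le_iff_le_comap, LieSubmodule.lieSpan_le]
    exact fun x hx => LieSubmodule.subset_lieSpan (Set.mem_image_of_mem f hx)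
  · rw [LieSubmodule.lieSpan_le]
    rintro _ ⟨x, hx, rfl⟩
    exact LieIdeal.mem_map (LieSubmodule.subset_lieSpan hx)

theorem Set.image_setOf_exists_mem_exists_mem_eq {α β : Type*} (q : α → β)
    (F : α → α → α) (G : β → β → β) (h : ∀ a b, q (F a b) = G (q a) (q b)) (s t : Set α) :
    q '' {y | ∃ a ∈ s, ∃ b ∈ t, y = F a b} = {y | ∃ a ∈ q '' s, ∃ b ∈ q '' t, y = G a b} := by
  ext y
  constructor
  · rintro ⟨_, ⟨a, ha, b, hb, rfl⟩, rfl⟩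
    exact ⟨q a, ⟨a, ha, rfl⟩, q b, ⟨b, hb, rfl⟩, h a b⟩
  · rintro ⟨_, ⟨a, ha, rfl⟩, _, ⟨b, hb, rfl⟩, rfl⟩
    exact ⟨F a b, ⟨a, ha, b, hb, rfl⟩, h a b⟩

theorem IsLiePXModHom.map_peiffer {δ : X →ₗ⁅k⁆ B} {ξ : B →ₗ⁅k⁆ LieDerivation k X X}
    {δ' : Y →ₗ⁅k⁆ B} {ξ' : B →ₗ⁅k⁆ LieDerivation k Y Y} {f : X →ₗ⁅k⁆ Y}
    (hf : IsLiePXModHom δ ξ δ' ξ' f) (m n : X) :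
    f (⁅m, n⁆ - ξ (δ m) n) = ⁅f m, f n⁆ - ξ' (δ' (f m)) (f n) := by
  rw [map_sub, LieHom.map_lie, hf.2, hf.1]

theorem liePeiffer_map_general
    (δ : X →ₗ⁅k⁆ B) (ξ : B →ₗ⁅k⁆ LieDerivation k X X)
    (δ' : Y →ₗ⁅k⁆ B) (ξ' : B →ₗ⁅k⁆ LieDerivation k Y Y)
    (q : X →ₗ⁅k⁆ Y) (hqhom : IsLiePXModHom δ ξ δ' ξ' q)
    (M N : LieSubalgebra k X) :
    LieIdeal.map q (liePeiffer δ ξ (M : Set X) (N : Set X)) =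
      liePeiffer δ' ξ' (q '' (M : Set X)) (q '' (N : Set X)) := by
  rw [liePeiffer, liePeiffer, LieIdeal.map_lieSpan, Set.image_union,
    Set.image_setOf_exists_mem_exists_mem_eq q _ (fun m n => ⁅m, n⁆ - ξ' (δ' m) n)
      hqhom.map_peiffer,
    Set.image_setOf_exists_mem_exists_mem_eq q _ (fun m n => ⁅n, m⁆ - ξ' (δ' n) m)
      fun m n => hqhom.map_peiffer n m]

/-- the Peiffer commutator of precrossed `B`-modules of Lie algebras is
preserved by regular images: for a surjective morphism `q : X → X'` and `B`-invariant
Lie subalgebras `M, N` of `X`, `q⟨M, N⟩ = ⟨q(M), q(N)⟩`. -/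
theorem liePeiffer_map
    (δ : X →ₗ⁅k⁆ B) (ξ : B →ₗ⁅k⁆ LieDerivation k X X) (hpre : IsLiePrecrossedMod δ ξ)
    (δ' : Y →ₗ⁅k⁆ B) (ξ' : B →ₗ⁅k⁆ LieDerivation k Y Y) (hpre' : IsLiePrecrossedMod δ' ξ')
    (q : X →ₗ⁅k⁆ Y) (hq : Function.Surjective q) (hqhom : IsLiePXModHom δ ξ δ' ξ' q)
    (M N : LieSubalgebra k X)
    (hM : IsLieBInvariant ξ (M : Set X)) (hN : IsLieBInvariant ξ (N : Set X)) :
    LieIdeal.map q (liePeiffer δ ξ (M : Set X) (N : Set X)) =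
      liePeiffer δ' ξ' (q '' (M : Set X)) (q '' (N : Set X)) :=
  liePeiffer_map_general δ ξ δ' ξ' q hqhom M N
end
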